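/- Let s be a positive odd integer, t = (s+1)/2, and in the additive group ℤ × (ℤ/2ℤ) let A_s = {(k, 0̄) : k ≥ 1} ∪ {(k, 1̄) : k ≥ t}. Then A_s generates ℤ × (ℤ/2ℤ) and has phase transition (2, s), with transition set {(k, 1̄) : |k| ≤ t − 1} (which has s elements). -/

import Mathlib

/-!
Every element of `ℤ × ZMod 2` has length at most two: `(k, 0)` is `0` or `±(|k|, 0)`, and
`(k, 1) = (k - t, 0) + (t, 1)`. An element of length at most one is `0` or `±a` with `a ∈ A_s`,
and `(k, 1)` is of that form exactly when `t ≤ |k|`. So the elements of length two are the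
`(k, 1)` with `|k| ≤ t - 1`, and there are `2t - 1 = s` of them.
-/

noncomputable def addWordLength {G : Type*} [AddGroup G] (A : Set G) (x : G) : ℕ :=
  sInf {n : ℕ | ∃ l : List G, l.length = n ∧ (∀ g ∈ l, g ∈ A ∪ (-A)) ∧ l.sum = x}

section WordLength

variable {G : Type*} [AddGroup G] {A : Set G}

theorem addWordLength_le_length {l : List G} (hl : ∀ g ∈ l, g ∈ A ∪ -A) :
    addWordLength A l.sum ≤ l.length :=
  Nat.sInf_le ⟨l, rfl, hl, rfl⟩

theorem addWordLength_zero : addWordLength A 0 = 0 :=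
  Nat.le_zero.mp (addWordLength_le_length (l := []) (by simp))

theorem addWordLength_le_one_of_mem {x : G} (hx : x ∈ A ∪ -A) : addWordLength A x ≤ 1 := by
  simpa using addWordLength_le_length (l := [x]) (by simpa using hx)

theorem addWordLength_add_le_two {x y : G} (hx : x ∈ A ∪ -A) (hy : y ∈ A ∪ -A) :
    addWordLength A (x + y) ≤ 2 := by
  simpa using addWordLength_le_length (l := [x, y]) fun g hg => by
    rcases List.mem_pair.mp hg with rfl | rfl <;> assumption

theorem exists_list_of_mem_addSubgroupClosure {x : G} (hx : x ∈ AddSubgroup.closure A) :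
    ∃ l : List G, (∀ g ∈ l, g ∈ A ∪ -A) ∧ l.sum = x := by
  rw [← AddSubgroup.mem_toAddSubmonoid, AddSubgroup.closure_toAddSubmonoid] at hx
  exact AddSubmonoid.exists_list_of_mem_closure hx

/-- Off the subgroup generated by `A` the infimum is over the empty set and takes the junk
value `0`. -/
theorem addWordLength_le_one_iff {x : G} (hx : x ∈ AddSubgroup.closure A) :
    addWordLength A x ≤ 1 ↔ x = 0 ∨ x ∈ A ∪ -A := by
  refine ⟨fun h => ?_, ?_⟩
  · obtain ⟨l, hlen, hl, rfl⟩ : addWordLength A x ∈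
        {n : ℕ | ∃ l : List G, l.length = n ∧ (∀ g ∈ l, g ∈ A ∪ (-A)) ∧ l.sum = x} := by
      obtain ⟨l, hl, hsum⟩ := exists_list_of_mem_addSubgroupClosure hx
      exact Nat.sInf_mem ⟨l.length, l, rfl, hl, hsum⟩
    rcases l with _ | ⟨g, _ | ⟨_, _⟩⟩
    · exact Or.inl List.sum_nil
    · exact Or.inr (by simpa using hl g (by simp))
    · simp only [List.length_cons] at hlen; omega
  · rintro (rfl | hx)
    · simp [addWordLength_zero]
    · exact addWordLength_le_one_of_mem hx

end WordLength

theorem ZMod.eq_zero_or_eq_one (c : ZMod 2) : c = 0 ∨ c = 1 := by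
  revert c; decide

namespace IntZModTwo

def genSet (t : ℕ) : Set (ℤ × ZMod 2) :=
  {x | ∃ k : ℤ, 1 ≤ k ∧ x = (k, 0)} ∪ {x | ∃ k : ℤ, (t : ℤ) ≤ k ∧ x = (k, 1)}

variable {t : ℕ}

theorem mem_genSet_union_neg_zero (k : ℤ) :
    ((k, 0) : ℤ × ZMod 2) ∈ genSet t ∪ -genSet t ↔ k ≠ 0 := by
  simp only [genSet, Set.mem_union, Set.mem_neg, Set.mem_ofPred_eq, Prod.neg_mk, neg_zero,
    Prod.mk.injEq]
  constructor
  · rintro ((⟨j, hj, rfl, -⟩ | ⟨j, -, -, h⟩) | (⟨j, hj, hk, -⟩ | ⟨j, -, -, h⟩)) <;>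
      first | omega | exact absurd h (by decide)
  · intro hk
    rcases hk.lt_or_gt with hk | hk
    · exact Or.inr (Or.inl ⟨-k, by omega, by omega, trivial⟩)
    · exact Or.inl (Or.inl ⟨k, by omega, rfl, trivial⟩)

theorem mem_genSet_union_neg_one (k : ℤ) :
    ((k, 1) : ℤ × ZMod 2) ∈ genSet t ∪ -genSet t ↔ (t : ℤ) ≤ |k| := by
  simp only [genSet, Set.mem_union, Set.mem_neg, Set.mem_ofPred_eq, Prod.neg_mk, Prod.mk.injEq]
  have h10 : (1 : ZMod 2) ≠ 0 := by decide
  have hneg : -(1 : ZMod 2) = 1 := by decide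
  rw [hneg]
  constructor
  · rintro ((⟨j, -, -, h⟩ | ⟨j, hj, rfl, -⟩) | (⟨j, -, -, h⟩ | ⟨j, hj, hk, -⟩))
    all_goals first | exact absurd h h10 | rw [le_abs]; omega
  · intro hk
    rcases le_abs'.mp hk with hk | hk
    · exact Or.inr (Or.inr ⟨-k, by omega, by omega, rfl⟩)
    · exact Or.inl (Or.inr ⟨k, hk, rfl, trivial⟩)

theorem closure_genSet : AddSubgroup.closure (genSet t) = ⊤ := by
  have hone : ((1 : ℤ), (0 : ZMod 2)) ∈ AddSubgroup.closure (genSet t) :=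
    AddSubgroup.subset_closure (Or.inl ⟨1, le_rfl, rfl⟩)
  have hzero : ∀ k : ℤ, ((k, 0) : ℤ × ZMod 2) ∈ AddSubgroup.closure (genSet t) := fun k => by
    simpa using AddSubgroup.zsmul_mem _ hone k
  have hparity : ((0 : ℤ), (1 : ZMod 2)) ∈ AddSubgroup.closure (genSet t) := by
    have ht : ((t : ℤ), (1 : ZMod 2)) ∈ AddSubgroup.closure (genSet t) :=
      AddSubgroup.subset_closure (Or.inr ⟨t, le_rfl, rfl⟩)
    simpa using AddSubgroup.sub_mem _ ht (hzero t)
  refine eq_top_iff.mpr fun ⟨k, c⟩ _ => ?_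
  obtain rfl | rfl := ZMod.eq_zero_or_eq_one c
  · exact hzero k
  · simpa using AddSubgroup.add_mem _ (hzero k) hparity

theorem addWordLength_genSet_le_two (x : ℤ × ZMod 2) : addWordLength (genSet t) x ≤ 2 := by
  obtain ⟨k, c⟩ := x
  obtain rfl | rfl := ZMod.eq_zero_or_eq_one c
  · by_cases hk : k = 0
    · rw [hk, Prod.mk_zero_zero, addWordLength_zero]; exact zero_le_two
    · exact (addWordLength_le_one_of_mem ((mem_genSet_union_neg_zero k).mpr hk)).trans
        one_le_two
  · by_cases hk : (t : ℤ) ≤ |k|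
    · exact (addWordLength_le_one_of_mem ((mem_genSet_union_neg_one k).mpr hk)).trans
        one_le_two
    · have hsplit : ((k, 1) : ℤ × ZMod 2) = (k - t, 0) + ((t : ℤ), 1) := by simp
      rw [hsplit]
      refine addWordLength_add_le_two ((mem_genSet_union_neg_zero _).mpr ?_)
        ((mem_genSet_union_neg_one _).mpr (by simp))
      rw [not_le, abs_lt] at hk
      omega

theorem addWordLength_genSet_eq_two_iff (x : ℤ × ZMod 2) :
    addWordLength (genSet t) x = 2 ↔ ∃ k : ℤ, |k| ≤ (t : ℤ) - 1 ∧ x = (k, 1) := by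
  have hle := addWordLength_genSet_le_two (t := t) x
  have hone := addWordLength_le_one_iff (A := genSet t) (x := x) (by simp [closure_genSet])
  rw [show addWordLength (genSet t) x = 2 ↔ ¬addWordLength (genSet t) x ≤ 1 by omega, hone]
  obtain ⟨k, c⟩ := x
  obtain rfl | rfl := ZMod.eq_zero_or_eq_one c
  · simp only [mem_genSet_union_neg_zero, Prod.mk.injEq]
    have h01 : (0 : ZMod 2) ≠ 1 := by decide
    simp [h01, em]
  · simp only [mem_genSet_union_neg_one, Prod.mk_eq_zero, one_ne_zero, and_false, false_or,
      Prod.mk.injEq, and_true, exists_eq_right']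
    omega

theorem natCard_transitionSet :
    Nat.card {x : ℤ × ZMod 2 | ∃ k : ℤ, |k| ≤ (t : ℤ) - 1 ∧ x = (k, 1)} = 2 * t - 1 := by
  have himage : {x : ℤ × ZMod 2 | ∃ k : ℤ, |k| ≤ (t : ℤ) - 1 ∧ x = (k, 1)} =
      (Finset.Icc (1 - (t : ℤ)) (t - 1)).image (fun k => (k, (1 : ZMod 2))) := by
    ext x
    simp only [abs_le, Set.mem_ofPred_eq, Finset.coe_image, Finset.coe_Icc, Set.mem_image,
      Set.mem_Icc, eq_comm (a := x)]
    grind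
  rw [himage, Nat.card_coe_set_eq, Set.ncard_coe_finset,
    Finset.card_image_of_injective _ fun a b h => (Prod.mk.inj h).1, Int.card_Icc]
  omega

end IntZModTwo

open IntZModTwo in
theorem stmt19_general (s : ℕ) (hodd : Odd s) (t : ℕ) (ht : t = (s + 1) / 2)
    (A : Set (ℤ × ZMod 2))
    (hA : A = {x : ℤ × ZMod 2 | ∃ k : ℤ, 1 ≤ k ∧ x = (k, (0 : ZMod 2))} ∪
              {x : ℤ × ZMod 2 | ∃ k : ℤ, (t : ℤ) ≤ k ∧ x = (k, (1 : ZMod 2))}) :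
    AddSubgroup.closure A = ⊤ ∧
    {x : ℤ × ZMod 2 | addWordLength A x = 2} =
      {x : ℤ × ZMod 2 | ∃ k : ℤ, |k| ≤ (t : ℤ) - 1 ∧ x = (k, (1 : ZMod 2))} ∧
    (∀ r : ℕ, 2 < r → {x : ℤ × ZMod 2 | addWordLength A x = r} = ∅) ∧
    Nat.card {x : ℤ × ZMod 2 | addWordLength A x = 2} = s := by
  change A = genSet t at hA
  subst hA
  have htransition : {x : ℤ × ZMod 2 | addWordLength (genSet t) x = 2} =
      {x : ℤ × ZMod 2 | ∃ k : ℤ, |k| ≤ (t : ℤ) - 1 ∧ x = (k, (1 : ZMod 2))} :=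
    Set.ext addWordLength_genSet_eq_two_iff
  refine ⟨closure_genSet, htransition, fun r hr => ?_, ?_⟩
  · refine Set.eq_empty_of_forall_notMem fun x (hx : addWordLength _ x = r) => ?_
    have := addWordLength_genSet_le_two (t := t) x
    omega
  · obtain ⟨m, rfl⟩ := hodd
    rw [htransition, natCard_transitionSet]
    omega

theorem stmt19 (s : ℕ) (hs : 0 < s) (hodd : Odd s) (t : ℕ) (ht : t = (s + 1) / 2)
    (A : Set (ℤ × ZMod 2))
    (hA : A = {x : ℤ × ZMod 2 | ∃ k : ℤ, 1 ≤ k ∧ x = (k, (0 : ZMod 2))} ∪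
              {x : ℤ × ZMod 2 | ∃ k : ℤ, (t : ℤ) ≤ k ∧ x = (k, (1 : ZMod 2))}) :
    AddSubgroup.closure A = ⊤ ∧
    {x : ℤ × ZMod 2 | addWordLength A x = 2} =
      {x : ℤ × ZMod 2 | ∃ k : ℤ, |k| ≤ (t : ℤ) - 1 ∧ x = (k, (1 : ZMod 2))} ∧
    (∀ r : ℕ, 2 < r → {x : ℤ × ZMod 2 | addWordLength A x = r} = ∅) ∧
    Nat.card {x : ℤ × ZMod 2 | addWordLength A x = 2} = s :=
  stmt19_general s hodd t ht A hA
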